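/- Let f : [a,b] → ℝ be absolutely continuous with γ ≤ f′(x) ≤ Γ a.e. on [a,b], and let g : [a,b] → ℝ be measurable with m ≤ g(x) ≤ M a.e. Then |(1/(b−a))∫_a^b f g − (1/(b−a))∫_a^b f · (1/(b−a))∫_a^b g − ((γ+Γ)/2)·(1/(b−a))∫_a^b (x − (a+b)/2) g(x) dx| ≤ (1/16)(b−a)(M−m)(Γ−γ). -/

import Mathlib

open MeasureTheory Set

lemma sign_dichotomy (u : ℝ → ℝ) (c d : ℝ) (hu : ContinuousOn u (Icc c d))
    (s : Set ℝ) (hs : s ⊆ Icc c d) (hconn : s.OrdConnected)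
    (hno : ∀ x ∈ s, u x ≠ 0) :
    (∀ x ∈ s, 0 < u x) ∨ (∀ x ∈ s, u x < 0) := by
  by_contra h
  push_neg at h
  obtain ⟨⟨x, hx, hx'⟩, ⟨y, hy, hy'⟩⟩ := h
  have hxneg : u x < 0 := ((hno x hx).lt_or_gt).resolve_right (not_lt.mpr hx')
  have hypos : 0 < u y := ((hno y hy).lt_or_gt).resolve_left (not_lt.mpr hy')
  have hsub : uIcc x y ⊆ s := hconn.uIcc_subset hx hy
  have h0 : (0:ℝ) ∈ uIcc (u x) (u y) := by
    rw [uIcc_of_le (by linarith)]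
    exact ⟨hxneg.le, hypos.le⟩
  obtain ⟨z, hz, hz0⟩ := intermediate_value_uIcc (hu.mono (hsub.trans hs)) h0
  exact hno z (hsub hz) hz0

lemma arith (K l m r α β c : ℝ) (hK : 0 ≤ K) (hl : 0 ≤ l) (hm : 0 ≤ m) (hr : 0 ≤ r)
    (hα0 : 0 ≤ α) (hβ0 : 0 ≤ β) (hc0 : 0 ≤ c)
    (hα : α ≤ K*l^2/2) (hβ : β ≤ K*r^2/2) (hc : c ≤ K*m^2/4)
    (h1 : α ≤ β + c) (h2 : β ≤ α + c) :
    α+β+c ≤ K*(l+m+r)^2/4 := by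
  nlinarith [mul_nonneg hK (sq_nonneg (l-r)), mul_nonneg hK (sq_nonneg (l+r-m)), mul_nonneg hK (mul_nonneg hl hm), mul_nonneg hK (mul_nonneg hr hm), mul_nonneg hK (mul_nonneg hl hr), sq_nonneg (l-r), mul_nonneg (mul_nonneg hK hm) hm]

lemma core (a b K : ℝ) (u : ℝ → ℝ) (hab : a < b) (hK : 0 ≤ K)
    (hu : ContinuousOn u (Icc a b))
    (hlip : ∀ x ∈ Icc a b, ∀ y ∈ Icc a b, x ≤ y → |u y - u x| ≤ K * (y - x))
    (hzero : (∫ x in a..b, u x) = 0) :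
    (∫ x in a..b, |u x|) ≤ K * (b - a) ^ 2 / 4 := by
  have hab' := hab.le
  have hiu : ∀ {x y : ℝ}, x ∈ Icc a b → y ∈ Icc a b → IntervalIntegrable u volume x y := by
    intro x y hx hy
    exact ContinuousOn.intervalIntegrable (hu.mono (Set.ordConnected_Icc.uIcc_subset hx hy))
  have hiabs : ∀ {x y : ℝ}, x ∈ Icc a b → y ∈ Icc a b → IntervalIntegrable (fun t => |u t|) volume x y :=
    fun hx hy => (hiu hx hy).abs
  have haI : a ∈ Icc a b := ⟨le_refl a, hab'⟩
  have hbI : b ∈ Icc a b := ⟨hab', le_refl b⟩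
  set Z := Icc a b ∩ u ⁻¹' {0} with hZdef
  have hZclosed : IsClosed Z := hu.preimage_isClosed_of_isClosed isClosed_Icc isClosed_singleton
  have hZne : Z.Nonempty := by
    by_contra hne
    rw [Set.not_nonempty_iff_eq_empty] at hne
    have hno : ∀ x ∈ Icc a b, u x ≠ 0 := by
      intro x hx h0
      have : x ∈ Z := ⟨hx, h0⟩
      rw [hne] at this
      exact notMem_empty x this
    rcases sign_dichotomy u a b hu (Icc a b) (subset_refl _) Set.ordConnected_Icc hno with hp | hn
    · have := intervalIntegral.intervalIntegral_pos_of_pos_on (hiu haI hbI)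
        (fun x hx => hp x (Ioo_subset_Icc_self hx)) hab
      rw [hzero] at this; exact lt_irrefl 0 this
    · have hneg := intervalIntegral.intervalIntegral_pos_of_pos_on ((hiu haI hbI).neg)
        (fun x hx => by simpa using (hn x (Ioo_subset_Icc_self hx))) hab
      simp only [Pi.neg_apply] at hneg
      rw [intervalIntegral.integral_neg, hzero] at hneg
      simp at hneg
  have hbddb : BddBelow Z := ⟨a, fun z hz => hz.1.1⟩
  have hbdda : BddAbove Z := ⟨b, fun z hz => hz.1.2⟩
  set p := sInf Z with hpdef
  set q := sSup Z with hqdef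
  have hpZ : p ∈ Z := hZclosed.csInf_mem hZne hbddb
  have hqZ : q ∈ Z := hZclosed.csSup_mem hZne hbdda
  have hpq : p ≤ q := csInf_le_csSup hZne hbddb hbdda
  have hpI : p ∈ Icc a b := hpZ.1
  have hqI : q ∈ Icc a b := hqZ.1
  have hup : u p = 0 := hpZ.2
  have huq : u q = 0 := hqZ.2
  -- integral computations
  have comp1 : ∀ c₀ e : ℝ, (∫ x in c₀..e, K*(x-c₀)) = K*(e-c₀)^2/2 := by
    intro c₀ e
    rw [show (fun x => K*(x-c₀)) = (fun x => (fun y => K*y) (x - c₀)) from rfl,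
      intervalIntegral.integral_comp_sub_right (fun y => K*y) c₀]
    rw [intervalIntegral.integral_const_mul, integral_id]
    ring
  have comp2 : ∀ c₀ e : ℝ, (∫ x in c₀..e, K*(e-x)) = K*(e-c₀)^2/2 := by
    intro c₀ e
    rw [show (fun x => K*(e-x)) = (fun x => (fun y => K*y) (e - x)) from rfl,
      intervalIntegral.integral_comp_sub_left (fun y => K*y) e]
    rw [intervalIntegral.integral_const_mul, integral_id]
    ring
  -- middle bound
  have hmdI : (p+q)/2 ∈ Icc a b := ⟨by linarith [hpI.1, hqI.1], by linarith [hpI.2, hqI.2]⟩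
  have hmid : (∫ x in p..q, |u x|) ≤ K*(q-p)^2/4 := by
    rcases eq_or_lt_of_le hpq with heq | hlt
    · rw [← heq]
      simp
    · have h1 : (∫ x in p..(p+q)/2, |u x|) ≤ ∫ x in p..(p+q)/2, K*(x-p) := by
        apply intervalIntegral.integral_mono_on (by linarith) (hiabs hpI hmdI)
          ((continuous_const.mul (continuous_id.sub continuous_const)).intervalIntegrable _ _)
        intro x hx
        have hxI : x ∈ Icc a b := ⟨le_trans hpI.1 hx.1, le_trans hx.2 hmdI.2⟩
        have := hlip p hpI x hxI hx.1
        rwa [hup, sub_zero] at this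
      have h2 : (∫ x in ((p+q)/2)..q, |u x|) ≤ ∫ x in ((p+q)/2)..q, K*(q-x) := by
        apply intervalIntegral.integral_mono_on (by linarith) (hiabs hmdI hqI)
          ((continuous_const.mul (continuous_const.sub continuous_id)).intervalIntegrable _ _)
        intro x hx
        have hxI : x ∈ Icc a b := ⟨le_trans hmdI.1 hx.1, le_trans hx.2 hqI.2⟩
        have := hlip x hxI q hqI hx.2
        rwa [huq, zero_sub, abs_neg] at this
      rw [← intervalIntegral.integral_add_adjacent_intervals (hiabs hpI hmdI) (hiabs hmdI hqI)]
      calc (∫ x in p..(p+q)/2, |u x|) + (∫ x in ((p+q)/2)..q, |u x|)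
          ≤ (∫ x in p..(p+q)/2, K*(x-p)) + (∫ x in ((p+q)/2)..q, K*(q-x)) := add_le_add h1 h2
        _ = K*(q-p)^2/4 := by rw [comp1, comp2]; ring
  -- left bound
  have hαbound : (∫ x in a..p, |u x|) ≤ K*(p-a)^2/2 := by
    calc (∫ x in a..p, |u x|) ≤ ∫ x in a..p, K*(p-x) := by
          apply intervalIntegral.integral_mono_on hpI.1 (hiabs haI hpI)
            ((continuous_const.mul (continuous_const.sub continuous_id)).intervalIntegrable _ _)
          intro x hx
          have hxI : x ∈ Icc a b := ⟨hx.1, le_trans hx.2 hpI.2⟩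
          have := hlip x hxI p hpI hx.2
          rwa [hup, zero_sub, abs_neg] at this
      _ = K*(p-a)^2/2 := comp2 a p
  -- right bound
  have hβbound : (∫ x in q..b, |u x|) ≤ K*(b-q)^2/2 := by
    calc (∫ x in q..b, |u x|) ≤ ∫ x in q..b, K*(x-q) := by
          apply intervalIntegral.integral_mono_on hqI.2 (hiabs hqI hbI)
            ((continuous_const.mul (continuous_id.sub continuous_const)).intervalIntegrable _ _)
          intro x hx
          have hxI : x ∈ Icc a b := ⟨le_trans hqI.1 hx.1, hx.2⟩
          have := hlip q hqI x hxI hx.1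
          rwa [huq, sub_zero] at this
      _ = K*(b-q)^2/2 := comp1 q b
  -- sign equalities
  have hAeq : |∫ x in a..p, u x| = ∫ x in a..p, |u x| := by
    rcases eq_or_lt_of_le hpI.1 with heq | hap
    · rw [← heq]; simp
    · have hno : ∀ x ∈ Ico a p, u x ≠ 0 := by
        intro x hx h0
        have hxZ : x ∈ Z := ⟨⟨hx.1, le_trans hx.2.le hpI.2⟩, h0⟩
        exact absurd (csInf_le hbddb hxZ) (not_le.mpr hx.2)
      rcases sign_dichotomy u a b hu (Ico a p) (fun z hz => ⟨hz.1, le_trans hz.2.le hpI.2⟩)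
          Set.ordConnected_Ico hno with hpos | hneg
      · have hnn : ∀ x ∈ Icc a p, 0 ≤ u x := by
          intro x hx
          rcases eq_or_lt_of_le hx.2 with heq2 | hlt2
          · rw [heq2, hup]
          · exact (hpos x ⟨hx.1, hlt2⟩).le
        have e1 : (∫ x in a..p, |u x|) = ∫ x in a..p, u x :=
          intervalIntegral.integral_congr (fun x hx => by
            rw [uIcc_of_le hap.le] at hx; exact abs_of_nonneg (hnn x hx))
        rw [e1, abs_of_nonneg (intervalIntegral.integral_nonneg hap.le hnn)]
      · have hnp : ∀ x ∈ Icc a p, u x ≤ 0 := by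
          intro x hx
          rcases eq_or_lt_of_le hx.2 with heq2 | hlt2
          · rw [heq2, hup]
          · exact (hneg x ⟨hx.1, hlt2⟩).le
        have e1 : (∫ x in a..p, |u x|) = ∫ x in a..p, -u x :=
          intervalIntegral.integral_congr (fun x hx => by
            rw [uIcc_of_le hap.le] at hx; exact abs_of_nonpos (hnp x hx))
        have hle : (∫ x in a..p, u x) ≤ 0 := by
          have h0 : 0 ≤ ∫ x in a..p, -u x :=
            intervalIntegral.integral_nonneg hap.le (fun x hx => neg_nonneg.mpr (hnp x hx))
          rw [intervalIntegral.integral_neg] at h0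
          linarith
        rw [e1, intervalIntegral.integral_neg, abs_of_nonpos hle]
  have hBeq : |∫ x in q..b, u x| = ∫ x in q..b, |u x| := by
    rcases eq_or_lt_of_le hqI.2 with heq | hqb
    · rw [heq]; simp
    · have hno : ∀ x ∈ Ioc q b, u x ≠ 0 := by
        intro x hx h0
        have hxZ : x ∈ Z := ⟨⟨le_trans hqI.1 hx.1.le, hx.2⟩, h0⟩
        exact absurd (le_csSup hbdda hxZ) (not_le.mpr hx.1)
      rcases sign_dichotomy u a b hu (Ioc q b) (fun z hz => ⟨le_trans hqI.1 hz.1.le, hz.2⟩)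
          Set.ordConnected_Ioc hno with hpos | hneg
      · have hnn : ∀ x ∈ Icc q b, 0 ≤ u x := by
          intro x hx
          rcases eq_or_lt_of_le hx.1 with heq2 | hlt2
          · rw [← heq2, huq]
          · exact (hpos x ⟨hlt2, hx.2⟩).le
        have e1 : (∫ x in q..b, |u x|) = ∫ x in q..b, u x :=
          intervalIntegral.integral_congr (fun x hx => by
            rw [uIcc_of_le hqb.le] at hx; exact abs_of_nonneg (hnn x hx))
        rw [e1, abs_of_nonneg (intervalIntegral.integral_nonneg hqb.le hnn)]
      · have hnp : ∀ x ∈ Icc q b, u x ≤ 0 := by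
          intro x hx
          rcases eq_or_lt_of_le hx.1 with heq2 | hlt2
          · rw [← heq2, huq]
          · exact (hneg x ⟨hlt2, hx.2⟩).le
        have e1 : (∫ x in q..b, |u x|) = ∫ x in q..b, -u x :=
          intervalIntegral.integral_congr (fun x hx => by
            rw [uIcc_of_le hqb.le] at hx; exact abs_of_nonpos (hnp x hx))
        have hle : (∫ x in q..b, u x) ≤ 0 := by
          have h0 : 0 ≤ ∫ x in q..b, -u x :=
            intervalIntegral.integral_nonneg hqb.le (fun x hx => neg_nonneg.mpr (hnp x hx))
          rw [intervalIntegral.integral_neg] at h0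
          linarith
        rw [e1, intervalIntegral.integral_neg, abs_of_nonpos hle]
  -- splitting
  have hsplitu : (∫ x in a..p, u x) + (∫ x in p..q, u x) + (∫ x in q..b, u x) = 0 := by
    rw [intervalIntegral.integral_add_adjacent_intervals (hiu haI hpI) (hiu hpI hqI),
      intervalIntegral.integral_add_adjacent_intervals (hiu haI hqI) (hiu hqI hbI), hzero]
  have hsplitabs : (∫ x in a..b, |u x|) =
      (∫ x in a..p, |u x|) + (∫ x in p..q, |u x|) + (∫ x in q..b, |u x|) := by
    rw [intervalIntegral.integral_add_adjacent_intervals (hiabs haI hpI) (hiabs hpI hqI),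
      intervalIntegral.integral_add_adjacent_intervals (hiabs haI hqI) (hiabs hqI hbI)]
  have hDle : |∫ x in p..q, u x| ≤ ∫ x in p..q, |u x| :=
    intervalIntegral.abs_integral_le_integral_abs hpq
  have hα0 : 0 ≤ ∫ x in a..p, |u x| :=
    intervalIntegral.integral_nonneg hpI.1 (fun x _ => abs_nonneg _)
  have hβ0 : 0 ≤ ∫ x in q..b, |u x| :=
    intervalIntegral.integral_nonneg hqI.2 (fun x _ => abs_nonneg _)
  have hc0 : 0 ≤ ∫ x in p..q, |u x| :=
    intervalIntegral.integral_nonneg hpq (fun x _ => abs_nonneg _)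
  have h1 : (∫ x in a..p, |u x|) ≤ (∫ x in q..b, |u x|) + (∫ x in p..q, |u x|) := by
    have hA : (∫ x in a..p, u x) = -((∫ x in p..q, u x) + (∫ x in q..b, u x)) := by linarith
    have : |∫ x in a..p, u x| ≤ |∫ x in p..q, u x| + |∫ x in q..b, u x| := by
      rw [hA, abs_neg]; exact abs_add_le _ _
    rw [hAeq, hBeq] at this
    linarith
  have h2 : (∫ x in q..b, |u x|) ≤ (∫ x in a..p, |u x|) + (∫ x in p..q, |u x|) := by
    have hB : (∫ x in q..b, u x) = -((∫ x in a..p, u x) + (∫ x in p..q, u x)) := by linarith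
    have : |∫ x in q..b, u x| ≤ |∫ x in a..p, u x| + |∫ x in p..q, u x| := by
      rw [hB, abs_neg]; exact abs_add_le _ _
    rw [hAeq, hBeq] at this
    linarith
  have harith := arith K (p-a) (q-p) (b-q) (∫ x in a..p, |u x|) (∫ x in q..b, |u x|)
    (∫ x in p..q, |u x|) hK (by linarith [hpI.1]) (by linarith)
    (by linarith [hqI.2]) hα0 hβ0 hc0 hαbound hβbound hmid (by linarith) (by linarith)
  rw [hsplitabs]
  have : K*((p-a)+(q-p)+(b-q))^2/4 = K*(b-a)^2/4 := by ring
  linarith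


section Test
variable (a b : ℝ)

lemma prod_ii (hab : a ≤ b) (φ g : ℝ → ℝ) (hφ : ContinuousOn φ (Icc a b))
    (hg : Measurable g) (C : ℝ) (hgb : ∀ᵐ x ∂volume, x ∈ Icc a b → |g x| ≤ C) :
    IntervalIntegrable (fun x => φ x * g x) volume a b := by
  rw [intervalIntegrable_iff_integrableOn_Ioc_of_le hab]
  obtain ⟨Cφ, hCφ⟩ := (isCompact_Icc (a := a) (b := b)).exists_bound_of_continuousOn hφ
  apply Integrable.mono' (g := fun _ => Cφ * C)
    ((integrableOn_const_iff).mpr (Or.inr measure_Ioc_lt_top))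
  · exact ((hφ.mono Ioc_subset_Icc_self).aestronglyMeasurable measurableSet_Ioc).mul
      hg.aestronglyMeasurable.restrict
  · filter_upwards [ae_restrict_of_ae hgb, ae_restrict_mem measurableSet_Ioc] with x hx hmem
    have h1 := hCφ x (Ioc_subset_Icc_self hmem)
    have h2 := hx (Ioc_subset_Icc_self hmem)
    rw [Real.norm_eq_abs, abs_mul]
    rw [Real.norm_eq_abs] at h1
    exact mul_le_mul h1 h2 (abs_nonneg _) (le_trans (abs_nonneg _) h1)

end Test

theorem perturbed_ostrowski_two_functions
    (a b γ Γ m M : ℝ) (f f' g : ℝ → ℝ) (hab : a < b)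
    (hderiv : ∀ x ∈ Icc a b, HasDerivAt f (f' x) x)
    (hint : IntervalIntegrable f' volume a b)
    (hfbound : ∀ᵐ x ∂volume, x ∈ Icc a b → γ ≤ f' x ∧ f' x ≤ Γ)
    (hgmeas : Measurable g)
    (hgbound : ∀ᵐ x ∂volume, x ∈ Icc a b → m ≤ g x ∧ g x ≤ M) :
    |(1 / (b - a)) * (∫ x in a..b, f x * g x) -
        (1 / (b - a)) * (∫ x in a..b, f x) * ((1 / (b - a)) * ∫ x in a..b, g x) -
        ((γ + Γ) / 2) * ((1 / (b - a)) * ∫ x in a..b, (x - (a + b) / 2) * g x)| ≤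
      (1 / 16) * (b - a) * (M - m) * (Γ - γ) := by
  have hL : (0:ℝ) < b - a := by linarith
  have hLne : b - a ≠ 0 := ne_of_gt hL
  have hIccvol : volume (Icc a b) ≠ 0 := by
    rw [Real.volume_Icc]
    simp only [ne_eq, ENNReal.ofReal_eq_zero, not_le]
    linarith
  have hγΓ : γ ≤ Γ := by
    by_contra hc
    have h0 : ∀ᵐ x ∂volume, x ∉ Icc a b :=
      hfbound.mono (fun x hx hmem => hc ((hx hmem).1.trans (hx hmem).2))
    rw [← measure_eq_zero_iff_ae_notMem] at h0
    exact hIccvol h0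
  have hmM : m ≤ M := by
    by_contra hc
    have h0 : ∀ᵐ x ∂volume, x ∉ Icc a b :=
      hgbound.mono (fun x hx hmem => hc ((hx hmem).1.trans (hx hmem).2))
    rw [← measure_eq_zero_iff_ae_notMem] at h0
    exact hIccvol h0
  have hfc : ContinuousOn f (Icc a b) := fun x hx =>
    (hderiv x hx).continuousAt.continuousWithinAt
  -- two-sided increments
  have hfdiff : ∀ x ∈ Icc a b, ∀ y ∈ Icc a b, x ≤ y →
      γ * (y - x) ≤ f y - f x ∧ f y - f x ≤ Γ * (y - x) := by
    intro x hx y hy hxy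
    have hsub : uIcc x y ⊆ uIcc a b := by
      rw [uIcc_of_le hxy, uIcc_of_le hab.le]
      exact Icc_subset_Icc hx.1 hy.2
    have hii : IntervalIntegrable f' volume x y := hint.mono_set hsub
    have hftc : (∫ t in x..y, f' t) = f y - f x :=
      intervalIntegral.integral_eq_sub_of_hasDerivAt (fun t ht => hderiv t
        (by rw [uIcc_of_le hxy] at ht; exact ⟨le_trans hx.1 ht.1, le_trans ht.2 hy.2⟩)) hii
    have hae : ∀ᵐ t ∂(volume.restrict (Icc x y)), γ ≤ f' t ∧ f' t ≤ Γ := by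
      filter_upwards [ae_restrict_of_ae hfbound, ae_restrict_mem measurableSet_Icc] with t h1 h2
      exact h1 ⟨le_trans hx.1 h2.1, le_trans h2.2 hy.2⟩
    constructor
    · have hmono : (∫ t in x..y, γ) ≤ ∫ t in x..y, f' t := by
        apply intervalIntegral.integral_mono_ae_restrict hxy intervalIntegrable_const hii
        filter_upwards [hae] with t ht using ht.1
      rw [intervalIntegral.integral_const, smul_eq_mul, hftc, mul_comm] at hmono
      exact hmono
    · have hmono : (∫ t in x..y, f' t) ≤ ∫ t in x..y, Γ := by
        apply intervalIntegral.integral_mono_ae_restrict hxy hii intervalIntegrable_const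
        filter_upwards [hae] with t ht using ht.2
      rw [intervalIntegral.integral_const, smul_eq_mul, hftc, mul_comm] at hmono
      exact hmono
  -- integrability of various functions
  have hgb' : ∀ᵐ x ∂volume, x ∈ Icc a b → |g x| ≤ max |m| |M| := by
    filter_upwards [hgbound] with x hx hmem
    have h := hx hmem
    rw [abs_le]
    constructor
    · have : -|m| ≤ m := neg_abs_le m
      have h2 : |m| ≤ max |m| |M| := le_max_left _ _
      linarith [h.1]
    · have : M ≤ |M| := le_abs_self M
      have h2 : |M| ≤ max |m| |M| := le_max_right _ _
      linarith [h.2]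
  have hfg_ii : IntervalIntegrable (fun x => f x * g x) volume a b :=
    prod_ii a b hab.le f g hfc hgmeas _ hgb'
  have hxg_ii : IntervalIntegrable (fun x => x * g x) volume a b :=
    prod_ii a b hab.le (fun x => x) g continuous_id.continuousOn hgmeas _ hgb'
  have hg_ii : IntervalIntegrable g volume a b := by
    have := prod_ii a b hab.le (fun _ => (1:ℝ)) g continuousOn_const hgmeas _ hgb'
    simpa using this
  have hfi : IntervalIntegrable f volume a b :=
    ContinuousOn.intervalIntegrable (by rwa [uIcc_of_le hab.le])
  have hlin_ii : IntervalIntegrable (fun x => ((γ+Γ)/2) * x) volume a b :=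
    (continuous_const.mul continuous_id).intervalIntegrable a b
  -- the function u
  set If := (∫ x in a..b, f x) with hIf
  set c₀ := (If - ((γ+Γ)/2) * ((b^2-a^2)/2)) / (b-a) with hc₀
  set u : ℝ → ℝ := fun x => f x - ((γ+Γ)/2)*x - c₀ with hu
  have hu_cont : ContinuousOn u (Icc a b) :=
    (hfc.sub (continuous_const.mul continuous_id).continuousOn).sub continuousOn_const
  have hu_ii : IntervalIntegrable u volume a b :=
    (hfi.sub hlin_ii).sub intervalIntegrable_const
  have hulip : ∀ x ∈ Icc a b, ∀ y ∈ Icc a b, x ≤ y →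
      |u y - u x| ≤ ((Γ-γ)/2) * (y - x) := by
    intro x hx y hy hxy
    obtain ⟨h1, h2⟩ := hfdiff x hx y hy hxy
    have he : u y - u x = f y - f x - ((γ+Γ)/2)*(y-x) := by rw [hu]; ring
    rw [he, abs_le]
    constructor <;> nlinarith [h1, h2]
  have huzero : (∫ x in a..b, u x) = 0 := by
    have e1 : (∫ x in a..b, u x) = (∫ x in a..b, (f x - ((γ+Γ)/2)*x)) - ∫ x in a..b, (c₀:ℝ) :=
      intervalIntegral.integral_sub (hfi.sub hlin_ii) intervalIntegrable_const
    have e2 : (∫ x in a..b, (f x - ((γ+Γ)/2)*x)) = If - ((γ+Γ)/2) * ((b^2-a^2)/2) := by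
      rw [intervalIntegral.integral_sub hfi hlin_ii, intervalIntegral.integral_const_mul,
        integral_id, hIf]
    rw [e1, e2, intervalIntegral.integral_const, smul_eq_mul, hc₀]
    field_simp
    ring
  set Ig := (∫ x in a..b, g x) with hIg
  set Ifg := (∫ x in a..b, f x * g x) with hIfg
  set Ixg := (∫ x in a..b, x * g x) with hIxg
  have i1' : IntervalIntegrable (fun x => ((γ+Γ)/2)*(x*g x)) volume a b := hxg_ii.const_mul _
  have i2' : IntervalIntegrable (fun x => c₀*(g x)) volume a b := hg_ii.const_mul _
  have i3' : IntervalIntegrable (fun x => ((m+M)/2)*(f x)) volume a b := hfi.const_mul _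
  have i4 : IntervalIntegrable (fun x => (((m+M)/2)*((γ+Γ)/2))*x) volume a b :=
    (continuous_const.mul continuous_id).intervalIntegrable a b
  have is1 := hfg_ii.sub i1'
  have is2 := is1.sub i2'
  have is3 := is2.sub i3'
  have ia4 := is3.add i4
  have hu_g_ii : IntervalIntegrable (fun x => u x * (g x - (m+M)/2)) volume a b := by
    have h1 : IntervalIntegrable (fun x => u x * g x) volume a b :=
      prod_ii a b hab.le u g hu_cont hgmeas _ hgb'
    have h2 : IntervalIntegrable (fun x => u x * ((m+M)/2)) volume a b := hu_ii.mul_const _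
    have he : (fun x => u x * (g x - (m+M)/2)) = fun x => u x * g x - u x * ((m+M)/2) := by
      funext x; ring
    rw [he]; exact h1.sub h2
  have hexpand : (∫ x in a..b, u x * (g x - (m+M)/2)) =
      Ifg - ((γ+Γ)/2)*Ixg - c₀*Ig - ((m+M)/2)*If
        + (((m+M)/2)*((γ+Γ)/2))*((b^2-a^2)/2) + ((m+M)/2)*c₀*(b-a) := by
    have heq : ∀ x, u x * (g x - (m+M)/2) =
        f x * g x - ((γ+Γ)/2)*(x*g x) - c₀*(g x) - ((m+M)/2)*(f x)
          + (((m+M)/2)*((γ+Γ)/2))*x + ((m+M)/2)*c₀ := by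
      intro x; rw [hu]; ring
    calc (∫ x in a..b, u x * (g x - (m+M)/2))
        = ∫ x in a..b, (f x * g x - ((γ+Γ)/2)*(x*g x) - c₀*(g x) - ((m+M)/2)*(f x)
            + (((m+M)/2)*((γ+Γ)/2))*x + ((m+M)/2)*c₀) :=
          intervalIntegral.integral_congr (fun x _ => heq x)
      _ = _ := by
          rw [intervalIntegral.integral_add ia4 intervalIntegrable_const,
            intervalIntegral.integral_add is3 i4,
            intervalIntegral.integral_sub is2 i3',
            intervalIntegral.integral_sub is1 i2',
            intervalIntegral.integral_sub hfg_ii i1',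
            intervalIntegral.integral_const_mul, intervalIntegral.integral_const_mul,
            intervalIntegral.integral_const_mul, intervalIntegral.integral_const_mul,
            integral_id, intervalIntegral.integral_const, smul_eq_mul]
          rw [← hIfg, ← hIxg, ← hIg, ← hIf]
          ring
  have hgc : ∀ᵐ x ∂(volume.restrict (Icc a b)),
      |u x * (g x - (m+M)/2)| ≤ |u x| * ((M-m)/2) := by
    filter_upwards [ae_restrict_of_ae hgbound, ae_restrict_mem measurableSet_Icc] with x hx hmem
    have h := hx hmem
    rw [abs_mul]
    apply mul_le_mul_of_nonneg_left _ (abs_nonneg _)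
    rw [abs_le]
    constructor
    · linarith [h.1]
    · linarith [h.2]
  have hcore := core a b ((Γ-γ)/2) u hab (by linarith) hu_cont hulip huzero
  have hmain : |∫ x in a..b, u x * (g x - (m+M)/2)| ≤ (M-m)/2 * ((Γ-γ)/2 * (b-a)^2/4) := by
    calc |∫ x in a..b, u x * (g x - (m+M)/2)|
        ≤ ∫ x in a..b, |u x * (g x - (m+M)/2)| :=
          intervalIntegral.abs_integral_le_integral_abs hab.le
      _ ≤ ∫ x in a..b, |u x| * ((M-m)/2) :=
          intervalIntegral.integral_mono_ae_restrict hab.le hu_g_ii.abs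
            (hu_ii.abs.mul_const _) hgc
      _ = ((M-m)/2) * ∫ x in a..b, |u x| := by
          rw [intervalIntegral.integral_mul_const]; ring
      _ ≤ (M-m)/2 * ((Γ-γ)/2 * (b-a)^2/4) :=
          mul_le_mul_of_nonneg_left hcore (by linarith)
  have hIpg : (∫ x in a..b, (x - (a+b)/2) * g x) = Ixg - ((a+b)/2)*Ig := by
    have he : ∀ x:ℝ, (x - (a+b)/2) * g x = x * g x - ((a+b)/2)*(g x) := fun x => by ring
    rw [intervalIntegral.integral_congr (fun x _ => he x),
      intervalIntegral.integral_sub hxg_ii (hg_ii.const_mul _),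
      intervalIntegral.integral_const_mul, ← hIxg, ← hIg]
  have hT : 1 / (b - a) * Ifg - 1 / (b - a) * If * (1 / (b - a) * Ig)
      - (γ + Γ) / 2 * (1 / (b - a) * (Ixg - (a+b)/2*Ig))
      = (1/(b-a)) * ∫ x in a..b, u x * (g x - (m+M)/2) := by
    rw [hexpand, hc₀]
    field_simp
    ring
  rw [hIpg, hT, abs_mul, abs_of_pos (by positivity : (0:ℝ) < 1/(b-a))]
  calc (1/(b-a)) * |∫ x in a..b, u x * (g x - (m+M)/2)|
      ≤ (1/(b-a)) * ((M-m)/2 * ((Γ-γ)/2 * (b-a)^2/4)) :=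
        mul_le_mul_of_nonneg_left hmain (by positivity)
    _ = 1 / 16 * (b - a) * (M - m) * (Γ - γ) := by
        field_simp
        ring
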